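/- arXiv:2003.01432 — 2 statements merged into one kernel-verified Lean document; each statement's English description precedes it below -/
import Mathlib

section
/- (Representer theorem for projection learning) Let K be an operator-valued kernel on X with vv-RKHS H_K ⊂ F(X, ℝ^d), let Φ : ℝ^d → L²(Θ) be a projection operator, and let ℓ : L²(Θ) × L²(Θ) → ℝ be continuous and convex in its second argument. For λ > 0, the optimization problem min_{h ∈ H_K} (1/n)Σ_{i=1}^n ℓ(y_i, Φh(x_i)) + λ‖h‖²_{H_K} admits a unique minimizer h*, and there exist coefficients α_1, ..., α_n ∈ ℝ^d such that h* = Σ_{j=1}^n K_{x_j} α_j. -/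
/-!
The data term depends on `h` only through the values `K_{x_i}^* h`, and these do not change when
`h` is replaced by its orthogonal projection onto the finite-dimensional span `S` of the ranges of
the `K_{x_i}`; the projection also does not increase `‖h‖`. So it suffices to minimise over `S`.
There a convex continuous function is bounded below by `-C‖h‖` away from the unit ball, so the
regulariser `λ‖h‖²` makes the objective coercive and a minimiser exists; since
`λ‖h‖²` is strongly convex, the objective is strictly convex and the minimiser is unique.
-/

open MeasureTheory ContinuousLinearMap Filter Metric Set

theorem ConvexOn.sum {E ι : Type*} [AddCommGroup E] [Module ℝ E] {s : Set E}
    (hs : Convex ℝ s) (t : Finset ι) {f : ι → E → ℝ} (hf : ∀ i ∈ t, ConvexOn ℝ s (f i)) :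
    ConvexOn ℝ s (fun x => ∑ i ∈ t, f i x) := by
  classical
  induction t using Finset.induction_on with
  | empty => simpa using convexOn_const 0 hs
  | insert a t ha ih =>
    simp only [Finset.sum_insert ha]
    exact (hf a (t.mem_insert_self a)).add (ih fun i hi => hf i (Finset.mem_insert_of_mem hi))

section NormedSpace

variable {E : Type*} [NormedAddCommGroup E] [NormedSpace ℝ E] {f : E → ℝ} {lam : ℝ}

theorem ConvexOn.neg_mul_norm_le {M : ℝ} (hf : ConvexOn ℝ univ f)
    (hM : ∀ u ∈ sphere (0 : E) 1, -M ≤ f u) {x : E} (hx : 1 ≤ ‖x‖) :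
    -((M + |f 0|) * ‖x‖) ≤ f x := by
  have hpos : 0 < ‖x‖ := one_pos.trans_le hx
  set t := ‖x‖⁻¹
  have ht : 0 < t := inv_pos.2 hpos
  have ht1 : t ≤ 1 := inv_le_one_of_one_le₀ hx
  have hu : t • x ∈ sphere (0 : E) 1 := by
    simp [t, norm_smul, hpos.ne']
  have hconv : f (t • x) ≤ t * f x + (1 - t) * f 0 := by
    simpa using hf.2 (mem_univ x) (mem_univ 0) ht.le (sub_nonneg.2 ht1) (by ring)
  have hscaled : -M - |f 0| ≤ t * f x := by
    nlinarith [hM _ hu, le_abs_self (f 0), abs_nonneg (f 0)]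
  calc -((M + |f 0|) * ‖x‖) = (-M - |f 0|) * ‖x‖ := by ring
    _ ≤ t * f x * ‖x‖ := mul_le_mul_of_nonneg_right hscaled hpos.le
    _ = f x := by rw [mul_right_comm, inv_mul_cancel₀ hpos.ne', one_mul]

theorem ConvexOn.tendsto_cocompact_add_mul_norm_sq [ProperSpace E] (hf : ConvexOn ℝ univ f)
    (hc : Continuous f) (hlam : 0 < lam) :
    Tendsto (fun x => f x + lam * ‖x‖ ^ 2) (cocompact E) atTop := by
  obtain ⟨M, hM⟩ := (isCompact_sphere (0 : E) 1).exists_bound_of_continuousOn hc.continuousOn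
  set C := M + |f 0|
  have hgrowth : Tendsto (fun r : ℝ => r * (lam * r - C)) atTop atTop :=
    tendsto_id.atTop_mul_atTop₀
      (tendsto_atTop_add_const_right _ (-C) (tendsto_id.const_mul_atTop hlam))
  refine tendsto_atTop_mono' _ ?_ (hgrowth.comp tendsto_norm_cocompact_atTop)
  filter_upwards [tendsto_norm_cocompact_atTop.eventually_ge_atTop 1] with x hx
  have hlower := hf.neg_mul_norm_le (fun u hu => neg_le_of_abs_le (hM u hu)) hx
  simp only [Function.comp_apply]
  linarith

theorem ConvexOn.exists_isMinOn_add_mul_norm_sq [ProperSpace E] (hf : ConvexOn ℝ univ f)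
    (hc : Continuous f) (hlam : 0 < lam) :
    ∃ x, IsMinOn (fun x => f x + lam * ‖x‖ ^ 2) univ x := by
  obtain ⟨x, hx⟩ := (hc.add (continuous_const.mul (continuous_norm.pow 2))).exists_forall_le
    (hf.tendsto_cocompact_add_mul_norm_sq hc hlam)
  exact ⟨x, isMinOn_univ_iff.2 hx⟩

end NormedSpace

section InnerProductSpace

variable {H : Type*} [NormedAddCommGroup H] [InnerProductSpace ℝ H] {f : H → ℝ} {lam : ℝ}

theorem ConvexOn.strictConvexOn_add_mul_norm_sq {s : Set H} (hf : ConvexOn ℝ s f)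
    (hlam : 0 < lam) : StrictConvexOn ℝ s (fun x => f x + lam * ‖x‖ ^ 2) := by
  refine StrongConvexOn.strictConvexOn (m := 2 * lam) ?_ (by positivity)
  rw [strongConvexOn_iff_convex]
  convert hf using 2
  ring

theorem Submodule.exists_mem_isMinOn_add_mul_norm_sq (S : Submodule ℝ H) [FiniteDimensional ℝ S]
    (hf : ConvexOn ℝ univ f) (hc : Continuous f) (hfS : ∀ x, f (S.starProjection x) = f x)
    (hlam : 0 < lam) : ∃ x ∈ S, IsMinOn (fun x => f x + lam * ‖x‖ ^ 2) univ x := by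
  obtain ⟨s, hs⟩ := (hf.comp_linearMap S.subtype).exists_isMinOn_add_mul_norm_sq
    (hc.comp continuous_subtype_val) hlam
  refine ⟨s, s.2, fun x _ => ?_⟩
  calc f s + lam * ‖(s : H)‖ ^ 2
      ≤ f (S.starProjection x) + lam * ‖S.starProjection x‖ ^ 2 :=
        hs (mem_univ (S.orthogonalProjectionOnto x))
    _ ≤ f x + lam * ‖x‖ ^ 2 := by
        rw [hfS]
        gcongr
        exact S.norm_starProjection_apply_le x

end InnerProductSpace

theorem ContinuousLinearMap.adjoint_starProjection_of_forall_mem {𝕜 E H : Type*} [RCLike 𝕜]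
    [NormedAddCommGroup E] [InnerProductSpace 𝕜 E] [CompleteSpace E]
    [NormedAddCommGroup H] [InnerProductSpace 𝕜 H] [CompleteSpace H]
    (A : E →L[𝕜] H) {S : Submodule 𝕜 H} [S.HasOrthogonalProjection]
    (hA : ∀ v, A v ∈ S) (x : H) :
    adjoint A (S.starProjection x) = adjoint A x := by
  refine ext_inner_right 𝕜 fun v => ?_
  rw [adjoint_inner_left, adjoint_inner_left, S.inner_starProjection_left_eq_right,
    Submodule.starProjection_eq_self_iff.2 (hA v)]

theorem stmt4_general {q d n : ℕ} {X H : Type*}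
    [NormedAddCommGroup H] [InnerProductSpace ℝ H] [CompleteSpace H]
    (Θ : Set (EuclideanSpace ℝ (Fin q)))
    (μ : Measure Θ)
    -- the partial kernel maps of the operator-valued kernel; the reproducing
    -- property reads `h(x) = (K_x)* h`
    (Kx : X → (EuclideanSpace ℝ (Fin d) →L[ℝ] H))
    (Φ : EuclideanSpace ℝ (Fin d) →L[ℝ] Lp ℝ 2 μ)
    (ℓ : Lp ℝ 2 μ → Lp ℝ 2 μ → ℝ)
    (hℓcont : ∀ y0, Continuous (ℓ y0))
    (hℓconv : ∀ y0, ConvexOn ℝ Set.univ (ℓ y0))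
    (x : Fin n → X) (y : Fin n → Lp ℝ 2 μ)
    (lam : ℝ) (hlam : 0 < lam) :
    ∃ hstar : H,
      (∀ h : H,
        (1 / (n : ℝ)) * ∑ i, ℓ (y i) (Φ ((adjoint (Kx (x i))) hstar)) + lam * ‖hstar‖ ^ 2 ≤
        (1 / (n : ℝ)) * ∑ i, ℓ (y i) (Φ ((adjoint (Kx (x i))) h)) + lam * ‖h‖ ^ 2) ∧
      (∀ h' : H,
        (∀ h : H,
          (1 / (n : ℝ)) * ∑ i, ℓ (y i) (Φ ((adjoint (Kx (x i))) h')) + lam * ‖h'‖ ^ 2 ≤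
          (1 / (n : ℝ)) * ∑ i, ℓ (y i) (Φ ((adjoint (Kx (x i))) h)) + lam * ‖h‖ ^ 2) →
        h' = hstar) ∧
      ∃ α : Fin n → EuclideanSpace ℝ (Fin d), hstar = ∑ j, Kx (x j) (α j) := by
  set T := LinearMap.lsum ℝ (fun _ : Fin n => EuclideanSpace ℝ (Fin d)) ℝ
    fun j => (Kx (x j)).toLinearMap
  have hT : ∀ α, T α = ∑ j, Kx (x j) (α j) := fun α => by simp [T]
  have hrange : ∀ i v, Kx (x i) v ∈ LinearMap.range T := fun i v =>
    ⟨Pi.single i v, LinearMap.lsum_piSingle ℝ (fun _ => EuclideanSpace ℝ (Fin d)) ℝ _ i v⟩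
  set D : H → ℝ := fun h => (1 / (n : ℝ)) * ∑ i, ℓ (y i) (Φ (adjoint (Kx (x i)) h))
  have hDconv : ConvexOn ℝ univ D :=
    (ConvexOn.sum convex_univ _ fun i _ =>
      (hℓconv (y i)).comp_linearMap (Φ.comp (adjoint (Kx (x i)))).toLinearMap).smul
      (by positivity)
  have hDcont : Continuous D := by fun_prop
  have hDproj : ∀ h, D ((LinearMap.range T).starProjection h) = D h := fun h => by
    simp only [D, adjoint_starProjection_of_forall_mem _ (hrange _)]
  obtain ⟨hstar, ⟨α, rfl⟩, hmin⟩ :=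
    (LinearMap.range T).exists_mem_isMinOn_add_mul_norm_sq hDconv hDcont hDproj hlam
  exact ⟨T α, fun h => hmin (mem_univ h),
    fun h' hh' => (hDconv.strictConvexOn_add_mul_norm_sq hlam).eq_of_isMinOn
      (fun h _ => hh' h) hmin trivial trivial, α, hT α⟩

/-- Representer theorem for projection learning. -/
theorem stmt4 {q d n : ℕ} {X H : Type*}
    [NormedAddCommGroup H] [InnerProductSpace ℝ H] [CompleteSpace H]
    (Θ : Set (EuclideanSpace ℝ (Fin q))) (hΘ : IsCompact Θ)
    (μ : Measure Θ)
    -- the partial kernel maps of the operator-valued kernel; the reproducing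
    -- property reads `h(x) = (K_x)* h`
    (Kx : X → (EuclideanSpace ℝ (Fin d) →L[ℝ] H))
    (Φ : EuclideanSpace ℝ (Fin d) →L[ℝ] Lp ℝ 2 μ)
    (ℓ : Lp ℝ 2 μ → Lp ℝ 2 μ → ℝ)
    (hℓcont : ∀ y0, Continuous (ℓ y0))
    (hℓconv : ∀ y0, ConvexOn ℝ Set.univ (ℓ y0))
    (x : Fin n → X) (y : Fin n → Lp ℝ 2 μ)
    (lam : ℝ) (hlam : 0 < lam) :
    ∃ hstar : H,
      (∀ h : H,
        (1 / (n : ℝ)) * ∑ i, ℓ (y i) (Φ ((adjoint (Kx (x i))) hstar)) + lam * ‖hstar‖ ^ 2 ≤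
        (1 / (n : ℝ)) * ∑ i, ℓ (y i) (Φ ((adjoint (Kx (x i))) h)) + lam * ‖h‖ ^ 2) ∧
      (∀ h' : H,
        (∀ h : H,
          (1 / (n : ℝ)) * ∑ i, ℓ (y i) (Φ ((adjoint (Kx (x i))) h')) + lam * ‖h'‖ ^ 2 ≤
          (1 / (n : ℝ)) * ∑ i, ℓ (y i) (Φ ((adjoint (Kx (x i))) h)) + lam * ‖h‖ ^ 2) →
        h' = hstar) ∧
      ∃ α : Fin n → EuclideanSpace ℝ (Fin d), hstar = ∑ j, Kx (x j) (α j) :=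
  stmt4_general Θ μ Kx Φ ℓ hℓcont hℓconv x y lam hlam
end

section
/- Let K ∈ ℝ^{N×N} be symmetric positive semidefinite and M ∈ ℝ^{N×N} be symmetric positive semidefinite, and λ > 0. Then the linear system (K M K + λK)v = K b has a solution v ∈ ℝ^N for every b ∈ ℝ^N. If moreover K is invertible, then (MK + λI) is invertible. -/
open Matrix

open scoped ComplexOrder

/-!
If `(K M K + c K) v = 0`, then `v⋆ (K M K) v + c v⋆ K v = 0` with both terms nonnegative, so
`K v = 0`. Thus `K M K + c K = K (M K + c I)` has the same kernel as `K`, and since its range lies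
in that of `K`, rank–nullity makes the two ranges equal.
-/

noncomputable section

theorem LinearMap.range_eq_of_le_of_ker_eq {K V W : Type*} [DivisionRing K] [AddCommGroup V]
    [Module K V] [AddCommGroup W] [Module K W] [FiniteDimensional K V] {f g : V →ₗ[K] W}
    (hle : range f ≤ range g) (hker : ker f = ker g) : range f = range g := by
  refine Submodule.eq_of_le_of_finrank_eq hle ?_
  have hf := finrank_range_add_finrank_ker f
  have hg := finrank_range_add_finrank_ker g
  rw [hker] at hf
  omega

namespace Matrix

variable {n 𝕜 : Type*} [Fintype n] [RCLike 𝕜]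

theorem PosSemidef.mulVec_eq_zero_of_add_mulVec_eq_zero {A B : Matrix n n 𝕜}
    (hA : A.PosSemidef) (hB : B.PosSemidef) {v : n → 𝕜} (h : (A + B) *ᵥ v = 0) :
    B *ᵥ v = 0 := by
  have hsum : star v ⬝ᵥ A *ᵥ v + star v ⬝ᵥ B *ᵥ v = 0 := by
    rw [← dotProduct_add, ← add_mulVec, h, dotProduct_zero]
  rw [← hB.dotProduct_mulVec_zero_iff]
  exact ((add_eq_zero_iff_of_nonneg (hA.dotProduct_mulVec_nonneg v)
    (hB.dotProduct_mulVec_nonneg v)).1 hsum).2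

variable {K M : Matrix n n 𝕜} {c : 𝕜}

theorem mul_mul_add_smul_eq_mul [DecidableEq n] :
    K * M * K + c • K = K * (M * K + c • 1) := by
  rw [Matrix.mul_add, Matrix.mul_smul, Matrix.mul_one, Matrix.mul_assoc]

theorem ker_mulVecLin_mul_mul_add_smul (hK : K.PosSemidef) (hM : M.PosSemidef) (hc : 0 < c) :
    LinearMap.ker (K * M * K + c • K).mulVecLin = LinearMap.ker K.mulVecLin := by
  ext v
  simp only [LinearMap.mem_ker, mulVecLin_apply]
  refine ⟨fun h => ?_, fun h => ?_⟩
  · have hKMK : (K * M * K).PosSemidef := by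
      simpa only [hK.1.eq] using hM.conjTranspose_mul_mul_same K
    have := hKMK.mulVec_eq_zero_of_add_mulVec_eq_zero (hK.smul hc.le) h
    rwa [smul_mulVec, smul_eq_zero, or_iff_right hc.ne'] at this
  · rw [add_mulVec, smul_mulVec, ← mulVec_mulVec, h, mulVec_zero, smul_zero, add_zero]

theorem range_mulVecLin_mul_mul_add_smul (hK : K.PosSemidef) (hM : M.PosSemidef) (hc : 0 < c) :
    LinearMap.range (K * M * K + c • K).mulVecLin = LinearMap.range K.mulVecLin := by
  classical
  refine LinearMap.range_eq_of_le_of_ker_eq ?_ (ker_mulVecLin_mul_mul_add_smul hK hM hc)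
  rw [mul_mul_add_smul_eq_mul, mulVecLin_mul]
  exact LinearMap.range_comp_le_range _ _

theorem isUnit_mul_add_smul_one [DecidableEq n] (hK : K.PosSemidef) (hM : M.PosSemidef)
    (hc : 0 < c) (hKu : IsUnit K) : IsUnit (M * K + c • 1) := by
  refine isUnit_of_mul_isUnit_right (x := K) ?_
  rw [← mulVec_injective_iff_isUnit, ← coe_mulVecLin, ← LinearMap.ker_eq_bot] at hKu ⊢
  rwa [← mul_mul_add_smul_eq_mul, ker_mulVecLin_mul_mul_add_smul hK hM hc]

end Matrix

theorem stmt6 {N : ℕ} (K M : Matrix (Fin N) (Fin N) ℝ)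
    (hK : K.PosSemidef) (hM : M.PosSemidef) (lam : ℝ) (hlam : 0 < lam) :
    (∀ b : Fin N → ℝ, ∃ v : Fin N → ℝ,
      (K * M * K + lam • K) *ᵥ v = K *ᵥ b) ∧
    (IsUnit K → IsUnit (M * K + lam • (1 : Matrix (Fin N) (Fin N) ℝ))) := by
  refine ⟨fun b => ?_, isUnit_mul_add_smul_one hK hM hlam⟩
  have hb : K *ᵥ b ∈ LinearMap.range (K * M * K + lam • K).mulVecLin := by
    rw [range_mulVecLin_mul_mul_add_smul hK hM hlam]
    exact LinearMap.mem_range_self _ b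
  exact hb
end
end
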